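/- If a mechanism M is μ-GDP, then for every ε ≥ 0 it satisfies (ε, δ(ε))-DP with δ(ε) = Φ(−ε/μ + μ/2) − e^ε·Φ(−ε/μ − μ/2), where Φ is the standard normal CDF. -/

import Mathlib

open MeasureTheory ProbabilityTheory Real Set Filter
open scoped NNReal ENNReal

/-- Standard normal CDF. -/
noncomputable def Phi (x : ℝ) : ℝ := ((gaussianReal 0 1) (Set.Iic x)).toReal

/-- Inverse of the standard normal CDF (on (0,1)). -/
noncomputable def PhiInv (p : ℝ) : ℝ := sInf {x : ℝ | p ≤ Phi x}

/-- Gaussian tradeoff function `G_μ`, extended by `G_μ(0)=1`, `G_μ(1)=0`. -/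
noncomputable def Gmu (μ α : ℝ) : ℝ :=
  if α ≤ 0 then 1 else if 1 ≤ α then 0 else Phi (PhiInv (1 - α) - μ)

/-- Optimal hypothesis-testing tradeoff function: minimal type-II error over
randomized tests with type-I error at most `α`. -/
noncomputable def tradeoff {Ω : Type*} [MeasurableSpace Ω] (P Q : Measure Ω) (α : ℝ) : ℝ :=
  sInf { b : ℝ | ∃ φ : Ω → ℝ, Measurable φ ∧ (∀ ω, φ ω ∈ Set.Icc (0:ℝ) 1) ∧
    (∫ ω, φ ω ∂P) ≤ α ∧ b = 1 - ∫ ω, φ ω ∂Q }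

/-- Rényi divergence of order `a > 1`. -/
noncomputable def renyiDiv {Ω : Type*} [MeasurableSpace Ω] (a : ℝ) (P Q : Measure Ω) : ℝ :=
  (a - 1)⁻¹ * Real.log (∫ ω, ((Measure.rnDeriv P Q ω).toReal) ^ a ∂Q)

/-- `(ε,δ)`-differential privacy. -/
def IsDP {X Ω : Type*} [MeasurableSpace Ω] (M : X → Measure Ω) (Neighbor : X → X → Prop)
    (ε δ : ℝ) : Prop :=
  ∀ x x', Neighbor x x' → ∀ S : Set Ω, MeasurableSet S →
    ((M x) S).toReal ≤ Real.exp ε * ((M x') S).toReal + δ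

/-- `ρ`-zero-concentrated differential privacy. -/
def IsZCDP {X Ω : Type*} [MeasurableSpace Ω] (M : X → Measure Ω) (Neighbor : X → X → Prop)
    (ρ : ℝ) : Prop :=
  ∀ x x', Neighbor x x' → ∀ a : ℝ, 1 < a → renyiDiv a (M x) (M x') ≤ ρ * a

/-- `μ`-Gaussian differential privacy. -/
def IsGDP {X Ω : Type*} [MeasurableSpace Ω] (M : X → Measure Ω) (Neighbor : X → X → Prop)
    (μ : ℝ) : Prop :=
  ∀ x x', Neighbor x x' → ∀ α ∈ Set.Icc (0:ℝ) 1, Gmu μ α ≤ tradeoff (M x) (M x') α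

lemma Phi_eq (x : ℝ) : Phi x = ∫ s in Iic x, gaussianPDFReal 0 1 s := by
  rw [Phi, gaussianReal_apply_eq_integral 0 one_ne_zero,
    ENNReal.toReal_ofReal (setIntegral_nonneg measurableSet_Iic
      fun s _ => gaussianPDFReal_nonneg 0 1 s)]

lemma Phi_nonneg (x : ℝ) : 0 ≤ Phi x := ENNReal.toReal_nonneg

lemma Phi_mono : Monotone Phi := fun a b hab =>
  ENNReal.toReal_mono (measure_ne_top _ _) (measure_mono (Iic_subset_Iic.2 hab))

lemma Phi_le_one (x : ℝ) : Phi x ≤ 1 := by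
  rw [Phi]
  have h : (gaussianReal 0 1) (Iic x) ≤ 1 := prob_le_one
  calc ((gaussianReal 0 1) (Iic x)).toReal ≤ (1:ℝ≥0∞).toReal :=
    (ENNReal.toReal_le_toReal (measure_ne_top _ _) ENNReal.one_ne_top).2 h
  _ = 1 := by simp

lemma Phi_sub_Phi (a b : ℝ) : Phi b - Phi a = ∫ s in a..b, gaussianPDFReal 0 1 s := by
  rw [Phi_eq, Phi_eq,
    intervalIntegral.integral_Iic_sub_Iic ((integrable_gaussianPDFReal 0 1).integrableOn)
      ((integrable_gaussianPDFReal 0 1).integrableOn)]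

lemma gauss_pdf_le_one (s : ℝ) : gaussianPDFReal 0 1 s ≤ 1 := by
  rw [gaussianPDFReal]
  have h1 : rexp (-(s - 0) ^ 2 / (2 * ((1:ℝ≥0):ℝ))) ≤ 1 := by
    rw [Real.exp_le_one_iff]
    have := sq_nonneg (s - 0)
    simp only [NNReal.coe_one]
    nlinarith
  have h2 : (√(2 * π * ((1:ℝ≥0):ℝ)))⁻¹ ≤ 1 := by
    rw [inv_le_one_iff₀]
    right
    rw [show (2 * π * ((1:ℝ≥0):ℝ)) = 2 * π by simp]
    nlinarith [Real.sqrt_le_sqrt (show (1:ℝ) ≤ 2 * π by nlinarith [Real.pi_gt_three]),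
      Real.sqrt_one]
  have h0 : (0:ℝ) ≤ (√(2 * π * ((1:ℝ≥0):ℝ)))⁻¹ := by positivity
  calc (√(2 * π * ((1:ℝ≥0):ℝ)))⁻¹ * rexp (-(s - 0) ^ 2 / (2 * ((1:ℝ≥0):ℝ)))
      ≤ 1 * 1 := mul_le_mul h2 h1 (le_of_lt (Real.exp_pos _)) zero_le_one
  _ = 1 := by ring

lemma Phi_lipschitz (a b : ℝ) (hab : a ≤ b) : Phi b - Phi a ≤ b - a := by
  rw [Phi_sub_Phi]
  calc ∫ s in a..b, gaussianPDFReal 0 1 s ≤ ∫ _s in a..b, (1:ℝ) := by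
        apply intervalIntegral.integral_mono_on hab
          ((integrable_gaussianPDFReal 0 1).intervalIntegrable)
          (intervalIntegrable_const)
        exact fun s _ => gauss_pdf_le_one s
  _ = b - a := by simp

lemma Phi_continuous : Continuous Phi := by
  have : LipschitzWith 1 Phi := by
    apply LipschitzWith.of_dist_le_mul
    intro x y
    rcases le_total x y with h | h
    · rw [Real.dist_eq, Real.dist_eq, abs_sub_comm (Phi x) (Phi y), abs_sub_comm x y,
        abs_of_nonneg (sub_nonneg.2 (Phi_mono h)), abs_of_nonneg (sub_nonneg.2 h), NNReal.coe_one, one_mul]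
      exact Phi_lipschitz x y h
    · rw [Real.dist_eq, Real.dist_eq,
        abs_of_nonneg (sub_nonneg.2 (Phi_mono h)), abs_of_nonneg (sub_nonneg.2 h), NNReal.coe_one, one_mul]
      exact Phi_lipschitz y x h
  exact this.continuous


lemma pdf_shift (s t : ℝ) : gaussianPDFReal 0 1 (s - t) = gaussianPDFReal t 1 s := by
  rw [gaussianPDFReal_sub, zero_add]

lemma ratio_le {μ ε s : ℝ} (hμ : 0 < μ) (hs : s ≤ -ε/μ + μ/2) :
    Real.exp ε * gaussianPDFReal 0 1 (s - μ) ≤ gaussianPDFReal 0 1 s := by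
  have hsμ : s * μ ≤ -ε + μ^2/2 := by
    have h' := mul_le_mul_of_nonneg_right hs hμ.le
    have he : (-ε/μ + μ/2) * μ = -ε + μ^2/2 := by field_simp
    linarith [he ▸ h']
  rw [gaussianPDFReal, gaussianPDFReal]
  rw [show Real.exp ε * ((√(2 * π * ((1:ℝ≥0):ℝ)))⁻¹ * rexp (-(s - μ - 0) ^ 2 / (2 * ((1:ℝ≥0):ℝ))))
      = (√(2 * π * ((1:ℝ≥0):ℝ)))⁻¹ * rexp (ε + -(s - μ - 0) ^ 2 / (2 * ((1:ℝ≥0):ℝ))) by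
    rw [Real.exp_add]; ring]
  apply mul_le_mul_of_nonneg_left _ (by positivity)
  apply Real.exp_le_exp.2
  simp only [NNReal.coe_one, mul_one, sub_zero]
  nlinarith

lemma ratio_ge {μ ε s : ℝ} (hμ : 0 < μ) (hs : -ε/μ + μ/2 ≤ s) :
    gaussianPDFReal 0 1 s ≤ Real.exp ε * gaussianPDFReal 0 1 (s - μ) := by
  have hsμ : -ε + μ^2/2 ≤ s * μ := by
    have h' := mul_le_mul_of_nonneg_right hs hμ.le
    have he : (-ε/μ + μ/2) * μ = -ε + μ^2/2 := by field_simp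
    linarith [he ▸ h']
  rw [gaussianPDFReal, gaussianPDFReal]
  rw [show Real.exp ε * ((√(2 * π * ((1:ℝ≥0):ℝ)))⁻¹ * rexp (-(s - μ - 0) ^ 2 / (2 * ((1:ℝ≥0):ℝ))))
      = (√(2 * π * ((1:ℝ≥0):ℝ)))⁻¹ * rexp (ε + -(s - μ - 0) ^ 2 / (2 * ((1:ℝ≥0):ℝ))) by
    rw [Real.exp_add]; ring]
  apply mul_le_mul_of_nonneg_left _ (by positivity)
  apply Real.exp_le_exp.2
  simp only [NNReal.coe_one, mul_one, sub_zero]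
  nlinarith

lemma Phi_shift_interval (a b t : ℝ) :
    Phi (b - t) - Phi (a - t) = ∫ s in a..b, gaussianPDFReal t 1 s := by
  rw [Phi_sub_Phi, ← intervalIntegral.integral_comp_sub_right (gaussianPDFReal 0 1) t]
  exact intervalIntegral.integral_congr fun s _ => pdf_shift s t

lemma Phi_key {μ ε : ℝ} (hμ : 0 < μ) (t : ℝ) :
    Phi t ≤ Real.exp ε * Phi (t - μ) +
      (Phi (-ε/μ + μ/2) - Real.exp ε * Phi (-ε/μ + μ/2 - μ)) := by
  set c := -ε/μ + μ/2 with hc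
  rcases le_total t c with h | h
  · have hI : Real.exp ε * (Phi (c - μ) - Phi (t - μ)) ≤ Phi c - Phi t := by
      rw [Phi_shift_interval t c μ, Phi_sub_Phi, ← intervalIntegral.integral_const_mul]
      apply intervalIntegral.integral_mono_on h
        (((integrable_gaussianPDFReal μ 1).intervalIntegrable).const_mul _)
        ((integrable_gaussianPDFReal 0 1).intervalIntegrable)
      intro s hs
      rw [← pdf_shift s μ]
      exact ratio_le hμ hs.2
    linarith
  · have hI : Phi t - Phi c ≤ Real.exp ε * (Phi (t - μ) - Phi (c - μ)) := by
      rw [Phi_shift_interval c t μ, Phi_sub_Phi, ← intervalIntegral.integral_const_mul]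
      apply intervalIntegral.integral_mono_on h
        ((integrable_gaussianPDFReal 0 1).intervalIntegrable)
        (((integrable_gaussianPDFReal μ 1).intervalIntegrable).const_mul _)
      intro s hs
      rw [← pdf_shift s μ]
      exact ratio_ge hμ hs.1
    linarith

lemma Phi_shift_Iic (c t : ℝ) : Phi (c - t) = ∫ s in Iic c, gaussianPDFReal t 1 s := by
  have h1 : (gaussianReal t 1) (Iic c) = (gaussianReal 0 1) (Iic (c - t)) := by
    have hmap := gaussianReal_map_add_const (μ := 0) (v := 1) t
    rw [zero_add] at hmap
    rw [← hmap, Measure.map_apply (measurable_add_const t) measurableSet_Iic]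
    congr 1
    ext y
    simp [le_sub_iff_add_le]
  rw [Phi, ← h1, gaussianReal_apply_eq_integral t one_ne_zero,
    ENNReal.toReal_ofReal (setIntegral_nonneg measurableSet_Iic
      fun s _ => gaussianPDFReal_nonneg t 1 s)]

lemma delta_nonneg {μ ε : ℝ} (hμ : 0 < μ) :
    0 ≤ Phi (-ε/μ + μ/2) - Real.exp ε * Phi (-ε/μ + μ/2 - μ) := by
  set c := -ε/μ + μ/2 with hc
  rw [sub_nonneg, Phi_shift_Iic c μ, Phi_eq, ← integral_const_mul]
  apply setIntegral_mono_on
  · exact ((integrable_gaussianPDFReal μ 1).integrableOn).const_mul _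
  · exact (integrable_gaussianPDFReal 0 1).integrableOn
  · exact measurableSet_Iic
  · intro s hs
    rw [← pdf_shift s μ]
    exact ratio_le hμ hs

lemma Phi_tendsto_atTop : Tendsto Phi atTop (nhds 1) := by
  have h := tendsto_measure_Iic_atTop (gaussianReal 0 1)
  rw [measure_univ] at h
  have h2 := (ENNReal.tendsto_toReal ENNReal.one_ne_top).comp h
  exact h2

lemma Phi_tendsto_atBot : Tendsto Phi atBot (nhds 0) := by
  have h := tendsto_measure_iInter_atBot (μ := gaussianReal 0 1) (s := fun x : ℝ => Iic x)
    (fun _ => measurableSet_Iic.nullMeasurableSet) (fun a b hab => Iic_subset_Iic.2 hab)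
    ⟨0, measure_ne_top _ _⟩
  have hempty : ⋂ x : ℝ, Iic x = (∅ : Set ℝ) := by
    ext y
    simp only [mem_iInter, mem_Iic, mem_empty_iff_false, iff_false, not_forall, not_le]
    exact ⟨y - 1, by linarith⟩
  rw [hempty, measure_empty] at h
  have h2 := (ENNReal.tendsto_toReal (by simp)).comp h
  exact h2

lemma le_Phi_PhiInv {a : ℝ} (h0 : 0 < a) (h1 : a < 1) : a ≤ Phi (PhiInv a) := by
  have hC : IsClosed {x : ℝ | a ≤ Phi x} := isClosed_le continuous_const Phi_continuous
  have hne : {x : ℝ | a ≤ Phi x}.Nonempty :=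
    (Phi_tendsto_atTop.eventually (eventually_ge_nhds h1)).exists
  have hbdd : BddBelow {x : ℝ | a ≤ Phi x} := by
    obtain ⟨c, hc⟩ := (Phi_tendsto_atBot.eventually (eventually_lt_nhds h0)).exists
    refine ⟨c, fun x hx => le_of_not_gt fun hxc => ?_⟩
    exact absurd (le_trans hx (Phi_mono hxc.le)) (not_le.2 hc)
  exact hC.csInf_mem hne hbdd

/-- GDP implies DP: a `μ`-GDP mechanism is `(ε, δ(ε))`-DP for every `ε ≥ 0`,
with `δ(ε) = Φ(-ε/μ + μ/2) - e^ε Φ(-ε/μ - μ/2)`. -/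

theorem gdp_implies_dp {X Ω : Type*} [MeasurableSpace Ω]
    (M : X → Measure Ω) (Neighbor : X → X → Prop)
    (hM : ∀ x, IsProbabilityMeasure (M x))
    (μ : ℝ) (hμ : 0 < μ) (h : IsGDP M Neighbor μ) :
    ∀ ε : ℝ, 0 ≤ ε →
      IsDP M Neighbor ε
        (Phi (-ε / μ + μ / 2) - Real.exp ε * Phi (-ε / μ - μ / 2)) := by
  intro ε hε x x' hN S hS
  haveI hP : IsProbabilityMeasure (M x) := hM x
  haveI hQ : IsProbabilityMeasure (M x') := hM x'
  rw [show -ε/μ - μ/2 = -ε/μ + μ/2 - μ by ring]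
  set P := M x with hPdef
  set Q := M x' with hQdef
  set a := (P S).toReal with ha
  set b := (Q S).toReal with hb
  have ha0 : 0 ≤ a := ENNReal.toReal_nonneg
  have hb0 : 0 ≤ b := ENNReal.toReal_nonneg
  have htoR : ∀ (ν : Measure Ω) [IsProbabilityMeasure ν], (ν S).toReal ≤ 1 := by
    intro ν _
    calc (ν S).toReal ≤ (1 : ℝ≥0∞).toReal :=
      (ENNReal.toReal_le_toReal (measure_ne_top _ _) ENNReal.one_ne_top).2 prob_le_one
    _ = 1 := by simp
  have ha1 : a ≤ 1 := htoR P
  set φ : Ω → ℝ := Sᶜ.indicator (fun _ => (1:ℝ)) with hφdef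
  have hφm : Measurable φ := measurable_const.indicator hS.compl
  have hφ01 : ∀ ω, φ ω ∈ Icc (0:ℝ) 1 := by
    intro ω
    by_cases hω : ω ∈ Sᶜ <;> simp [hφdef, hω]
  have hcompl : ∀ (ν : Measure Ω) [IsProbabilityMeasure ν],
      (∫ ω, φ ω ∂ν) = 1 - (ν S).toReal := by
    intro ν _
    rw [hφdef, integral_indicator_const (1:ℝ) hS.compl, smul_eq_mul, mul_one, measureReal_def,
      measure_compl hS (measure_ne_top _ _), measure_univ,
      ENNReal.toReal_sub_of_le prob_le_one ENNReal.one_ne_top]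
    simp
  have htrb : tradeoff P Q (1 - a) ≤ b := by
    have hbdd : BddBelow { b' : ℝ | ∃ ψ : Ω → ℝ, Measurable ψ ∧ (∀ ω, ψ ω ∈ Set.Icc (0:ℝ) 1) ∧
        (∫ ω, ψ ω ∂P) ≤ (1 - a) ∧ b' = 1 - ∫ ω, ψ ω ∂Q } := by
      refine ⟨0, ?_⟩
      rintro b' ⟨ψ, hψm, hψ01, -, rfl⟩
      have hint : Integrable ψ Q := by
        apply Integrable.mono' (integrable_const (1:ℝ)) hψm.aestronglyMeasurable
        exact ae_of_all _ fun ω => by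
          rw [Real.norm_eq_abs, abs_le]
          exact ⟨by linarith [(hψ01 ω).1], (hψ01 ω).2⟩
      have hintle : (∫ ω, ψ ω ∂Q) ≤ 1 := by
        calc (∫ ω, ψ ω ∂Q) ≤ ∫ _ω, (1:ℝ) ∂Q :=
          integral_mono hint (integrable_const 1) fun ω => (hψ01 ω).2
        _ = 1 := by rw [integral_const, measureReal_def, measure_univ]; simp
      linarith
    apply csInf_le hbdd
    refine ⟨φ, hφm, hφ01, ?_, ?_⟩
    · rw [hcompl P]
    · rw [hcompl Q]
      ring
  have hG := h x x' hN (1 - a) ⟨by linarith, by linarith⟩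
  have hGb : Gmu μ (1 - a) ≤ b := le_trans hG htrb
  have hδ := delta_nonneg (ε := ε) hμ
  have hεexp : (1:ℝ) ≤ Real.exp ε := by
    rw [show (1:ℝ) = Real.exp 0 by simp]
    exact Real.exp_le_exp.2 hε
  rcases le_or_gt a 0 with hA | hA
  · have hpos : 0 ≤ Real.exp ε * b := mul_nonneg (Real.exp_pos ε).le hb0
    linarith
  rcases le_or_gt 1 a with hB | hB
  · have h1 : Gmu μ (1 - a) = 1 := by
      simp only [Gmu]
      rw [if_pos (by linarith)]
    have hble : 1 ≤ b := h1 ▸ hGb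
    nlinarith
  · have hGval : Gmu μ (1 - a) = Phi (PhiInv a - μ) := by
      simp only [Gmu]
      rw [if_neg (by linarith), if_neg (by linarith), show (1 : ℝ) - (1 - a) = a by ring]
    have hkey := Phi_key (ε := ε) hμ (PhiInv a)
    have hle := le_Phi_PhiInv hA hB
    have hPhib : Phi (PhiInv a - μ) ≤ b := hGval ▸ hGb
    have hmul : Real.exp ε * Phi (PhiInv a - μ) ≤ Real.exp ε * b :=
      mul_le_mul_of_nonneg_left hPhib (Real.exp_pos ε).le
    linarith
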